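/- Let p ≥ 5 be a prime, Π a finite projective plane of order p², and c a code word of C(Π)^⊥ of weight w(c) = 2p² − 2p + 4 (i.e., ε = 2 in w(c) = 2p² − 2p + 2 + ε). Then there is at most one colour μ ∈ {1, ..., p−1} such that |K_μ| = 2p − 1. -/

import Mathlib

/-- A projective plane of order `n`, given by an abstract incidence relation `R`. -/
structure IsProjectivePlaneOrder {P L : Type*} (n : ℕ) (R : P → L → Prop) : Prop where
  existsUnique_line : ∀ x y : P, x ≠ y → ∃! l : L, R x l ∧ R y l
  existsUnique_point : ∀ l m : L, l ≠ m → ∃! x : P, R x l ∧ R x m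
  quadrangle : ∃ a b c d : P, a ≠ b ∧ a ≠ c ∧ a ≠ d ∧ b ≠ c ∧ b ≠ d ∧ c ≠ d ∧
    ∀ l : L, ¬(R a l ∧ R b l ∧ R c l) ∧ ¬(R a l ∧ R b l ∧ R d l) ∧
      ¬(R a l ∧ R c l ∧ R d l) ∧ ¬(R b l ∧ R c l ∧ R d l)
  line_card : ∀ l : L, {x | R x l}.ncard = n + 1
  point_card : ∀ x : P, {l | R x l}.ncard = n + 1

/-- A code word of the dual code `C(Π)^⊥`: a function from points to `F_p` summing
to zero on every line. -/
def IsDualCodeWord {P L : Type*} (p : ℕ) (R : P → L → Prop) (c : P → ZMod p) : Prop :=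
  ∀ l : L, ∑ᶠ x ∈ {y : P | R y l}, c x = 0

/-!
Counting the support of `c` on the `p² + 1` lines through a support point `P` of colour `a` gives
`|K_{-a}| ≥ 2p - 1`, with equality only if no line through `P` carries three further support
points. So if `|K_μ| = 2p - 1` and `c P = -μ`, the line joining `P` to a support point `Q` with
`c Q ≠ μ` carries exactly one more support point, of colour `μ - c Q`. Matching `Q` with that
point gives `|K_a| ≤ |K_{μ-a}|` for `a ∉ {0, μ, -μ}` and `|K_{-μ}| = |K_{2μ}| + 1`. Two colours
`μ ≠ ν` of size `2p - 1` contradict these relations: directly unless one is twice the other, and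
otherwise after scaling to `μ = 1`, `ν = 2`; there `4` is forced to be such a colour too, except for
`p = 5` and `p = 7`, where summing all colour classes to the weight gives the contradiction.
-/

open Finset

theorem two_mul_card_add_card_le_sum_add_card {ι : Type*} (s : Finset ι) (f : ι → ℕ)
    (hf : ∀ i ∈ s, 1 ≤ f i) :
    2 * #s + #{i ∈ s | 3 ≤ f i} ≤ ∑ i ∈ s, f i + #{i ∈ s | f i = 1} := by
  rw [card_filter, card_filter, card_eq_sum_ones, mul_sum, ← sum_add_distrib, ← sum_add_distrib]
  refine sum_le_sum fun i hi => ?_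
  have := hf i hi
  split_ifs <;> omega

namespace IsProjectivePlaneOrder

variable {Pt Ln : Type*} {n : ℕ} {R : Pt → Ln → Prop}

theorem eq_of_incident (hPP : IsProjectivePlaneOrder n R) {x y : Pt} (hxy : x ≠ y)
    {l m : Ln} (hxl : R x l) (hyl : R y l) (hxm : R x m) (hym : R y m) : l = m :=
  (hPP.existsUnique_line x y hxy).unique ⟨hxl, hyl⟩ ⟨hxm, hym⟩

variable [Fintype Ln] [DecidableRel R]

theorem card_incident (hPP : IsProjectivePlaneOrder n R) (P : Pt) : #{l | R P l} = n + 1 := by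
  rw [← hPP.point_card P, ← Set.ncard_coe_finset, coe_filter_univ]

variable [Fintype Pt] [DecidableEq Pt]

theorem card_filter_ne_eq_sum (hPP : IsProjectivePlaneOrder n R) (q : Pt → Prop)
    [DecidablePred q] (P : Pt) :
    #{x | q x ∧ x ≠ P} = ∑ l ∈ {l | R P l}, #{x | R x l ∧ q x ∧ x ≠ P} := by
  rw [← card_biUnion]
  · congr 1
    ext x
    simp only [mem_filter, mem_univ, true_and, mem_biUnion]
    constructor
    · rintro ⟨hx, hxP⟩
      obtain ⟨l, hPl, hxl⟩ := (hPP.existsUnique_line P x (Ne.symm hxP)).exists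
      exact ⟨l, hPl, hxl, hx, hxP⟩
    · rintro ⟨l, -, -, hx, hxP⟩
      exact ⟨hx, hxP⟩
  · intro l hl m hm hlm
    refine disjoint_left.2 fun x hxl hxm => hlm ?_
    simp only [coe_filter, mem_univ, true_and, Set.mem_ofPred_eq, ne_eq, mem_filter]
      at hl hm hxl hxm
    exact hPP.eq_of_incident (Ne.symm hxl.2.2) hl hxl.1 hm hxm.1

end IsProjectivePlaneOrder

namespace IsDualCodeWord

variable {Pt Ln : Type*} {n p : ℕ} {R : Pt → Ln → Prop} {c : Pt → ZMod p}

theorem sum_eq_zero_of_support_subset (hc : IsDualCodeWord p R c) {l : Ln} {T : Finset Pt}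
    (hT : ∀ x ∈ T, R x l) (hsupp : ∀ x, R x l → c x ≠ 0 → x ∈ T) : ∑ x ∈ T, c x = 0 := by
  rw [← finsum_mem_eq_sum_of_subset c (fun x hx => hsupp x hx.1 hx.2) hT]
  exact hc l

theorem exists_ne_incident (hc : IsDualCodeWord p R c) {P : Pt} (hP : c P ≠ 0) {l : Ln}
    (hPl : R P l) : ∃ x, R x l ∧ c x ≠ 0 ∧ x ≠ P := by
  by_contra! h
  refine hP ?_
  simpa using hc.sum_eq_zero_of_support_subset (T := {P}) (by simpa)
    fun x hxl hx => mem_singleton.2 (h x hxl hx)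

variable [Fintype Pt] [DecidableEq Pt] [DecidableRel R]

theorem exists_third_point (hPP : IsProjectivePlaneOrder n R) (hc : IsDualCodeWord p R c)
    {P : Pt} (hP : ∀ l, R P l → #{x | R x l ∧ c x ≠ 0 ∧ x ≠ P} ≤ 2) {Q : Pt} (hQP : Q ≠ P)
    (hQ : c Q ≠ 0) (hPQ : c P + c Q ≠ 0) :
    ∃ x, x ≠ P ∧ x ≠ Q ∧ c P + c Q + c x = 0 ∧ ∃ l, R P l ∧ R Q l ∧ R x l := by
  obtain ⟨l, hPl, hQl⟩ := (hPP.existsUnique_line P Q hQP.symm).exists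
  obtain ⟨x, hxl, hx, hxP, hxQ⟩ : ∃ x, R x l ∧ c x ≠ 0 ∧ x ≠ P ∧ x ≠ Q := by
    by_contra! h
    refine hPQ ?_
    rw [← sum_pair hQP.symm]
    refine hc.sum_eq_zero_of_support_subset (l := l) (by simp [hPl, hQl]) fun y hyl hy => ?_
    by_cases hyP : y = P
    · simp [hyP]
    · simp [h y hyl hy hyP]
  refine ⟨x, hxP, hxQ, ?_, l, hPl, hQl, hxl⟩
  have hthree : ∀ y, R y l → c y ≠ 0 → y ∈ ({P, Q, x} : Finset Pt) := by
    intro y hyl hy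
    by_contra hy'
    simp only [mem_insert, mem_singleton, not_or] at hy'
    refine (hP l hPl).not_gt (two_lt_card.2 ⟨Q, ?_, x, ?_, y, ?_, hxQ.symm, ?_, ?_⟩) <;>
      simp_all [eq_comm]
  have hsum := hc.sum_eq_zero_of_support_subset (by simp [hPl, hQl, hxl]) hthree
  rwa [sum_insert (by simp [hQP.symm, hxP.symm]), sum_pair hxQ.symm, ← add_assoc] at hsum

theorem card_erase_le_card_erase (hPP : IsProjectivePlaneOrder n R) (hc : IsDualCodeWord p R c)
    {P : Pt} (hP : ∀ l, R P l → #{x | R x l ∧ c x ≠ 0 ∧ x ≠ P} ≤ 2) {a b : ZMod p}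
    (ha : a ≠ 0) (hb : b ≠ 0) (hab : c P + a + b = 0) :
    #(({x | c x = a} : Finset Pt).erase P) ≤ #(({x | c x = b} : Finset Pt).erase P) := by
  -- `Q` is matched with the third support point of the line `PQ`.
  refine card_le_card_of_forall_subsingleton
    (fun Q x => x ≠ Q ∧ ∃ l, R P l ∧ R Q l ∧ R x l) (fun Q hQ => ?_) fun x hx Q₁ hQ₁ Q₂ hQ₂ => ?_
  · simp only [mem_erase, mem_filter, mem_univ, true_and] at hQ
    obtain ⟨hQP, hQa⟩ := hQ
    obtain ⟨x, hxP, hxQ, hsum, hl⟩ := hc.exists_third_point hPP hP hQP (hQa ▸ ha)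
      fun h => hb (by linear_combination hab - h + hQa)
    exact ⟨x, by simpa [hxP] using (by linear_combination hsum - hab - hQa : c x = b), hxQ, hl⟩
  · simp only [mem_erase, ne_eq, mem_filter, mem_univ, true_and, Set.mem_ofPred_eq]
      at hx hQ₁ hQ₂
    obtain ⟨hxP, hxb⟩ := hx
    obtain ⟨⟨hQ₁P, hQ₁a⟩, hxQ₁, l, hPl, hQ₁l, hxl⟩ := hQ₁
    obtain ⟨⟨hQ₂P, hQ₂a⟩, hxQ₂, m, hPm, hQ₂m, hxm⟩ := hQ₂
    obtain rfl := hPP.eq_of_incident (Ne.symm hxP) hPl hxl hPm hxm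
    by_contra hne
    refine (hP l hPl).not_gt
      (two_lt_card.2 ⟨Q₁, ?_, Q₂, ?_, x, ?_, hne, Ne.symm hxQ₁, Ne.symm hxQ₂⟩)
    all_goals simp_all

variable [Fintype Ln]

theorem card_incident_card_eq_one_le (hPP : IsProjectivePlaneOrder n R)
    (hc : IsDualCodeWord p R c) (P : Pt) :
    #{l | R P l ∧ #{x | R x l ∧ c x ≠ 0 ∧ x ≠ P} = 1} ≤ #{x | c x = -c P} := by
  refine card_le_card_of_forall_subsingleton (fun l x => R x l ∧ x ≠ P) ?_ ?_
  · intro l hl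
    simp only [mem_filter, mem_univ, true_and] at hl
    obtain ⟨x, hx⟩ := card_eq_one.1 hl.2
    have hxl : R x l ∧ c x ≠ 0 ∧ x ≠ P := by simpa using hx.ge (mem_singleton_self x)
    have hsum := hc.sum_eq_zero_of_support_subset (l := l) (T := {P, x})
      (by simp [hl.1, hxl.1]) fun y hyl hy => by
        by_cases hyP : y = P
        · simp [hyP]
        · have hy' : y ∈ ({x | R x l ∧ c x ≠ 0 ∧ x ≠ P} : Finset Pt) := by simp [hyl, hy, hyP]
          simp [hx ▸ hy']
    rw [sum_pair hxl.2.2.symm] at hsum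
    exact ⟨x, by simpa using eq_neg_of_add_eq_zero_right hsum, hxl.1, hxl.2.2⟩
  · intro x _ l hl m hm
    simp only [ne_eq, mem_filter, mem_univ, true_and, Set.mem_ofPred_eq] at hl hm
    exact hPP.eq_of_incident (Ne.symm hl.2.2) hl.1.1 hl.2.1 hm.1.1 hm.2.1

theorem two_mul_add_card_rich_le (hPP : IsProjectivePlaneOrder n R)
    (hc : IsDualCodeWord p R c) {P : Pt} (hP : c P ≠ 0) :
    2 * n + 3 + #{l | R P l ∧ 3 ≤ #{x | R x l ∧ c x ≠ 0 ∧ x ≠ P}}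
      ≤ #{x | c x ≠ 0} + #{x | c x = -c P} := by
  have hsupp : #{x | c x ≠ 0} = #{x | c x ≠ 0 ∧ x ≠ P} + 1 := by
    rw [← card_erase_add_one (s := {x | c x ≠ 0}) (by simpa using hP)]
    congr 2
    ext x
    simp [and_comm]
  have hpart := hPP.card_filter_ne_eq_sum (c · ≠ 0) P
  have hcount := two_mul_card_add_card_le_sum_add_card {l | R P l}
    (fun l => #{x | R x l ∧ c x ≠ 0 ∧ x ≠ P})
    fun l hl =>
      let ⟨x, hx⟩ := hc.exists_ne_incident hP (l := l) (by simpa using hl)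
      card_pos.2 ⟨x, by simpa using hx⟩
  have := hc.card_incident_card_eq_one_le hPP P
  simp only [filter_filter] at hcount
  rw [hPP.card_incident] at hcount
  omega

theorem two_mul_add_card_rich_le_of_weight (hPP : IsProjectivePlaneOrder (p ^ 2) R)
    (hc : IsDualCodeWord p R c) (hS : #{x | c x ≠ 0} + 2 * p = 2 * p ^ 2 + 4) {P : Pt}
    (hP : c P ≠ 0) :
    2 * p + #{l | R P l ∧ 3 ≤ #{x | R x l ∧ c x ≠ 0 ∧ x ≠ P}} ≤ #{x | c x = -c P} + 1 := by
  have := hc.two_mul_add_card_rich_le hPP hP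
  omega

theorem exists_eq_neg_forall_card_le_two (hPP : IsProjectivePlaneOrder (p ^ 2) R)
    (hc : IsDualCodeWord p R c) (hS : #{x | c x ≠ 0} + 2 * p = 2 * p ^ 2 + 4) {μ : ZMod p}
    (hμ : μ ≠ 0) (hfμ : #{x | c x = μ} + 1 = 2 * p) :
    ∃ P, c P = -μ ∧ ∀ l, R P l → #{x | R x l ∧ c x ≠ 0 ∧ x ≠ P} ≤ 2 := by
  obtain ⟨Q, hQ⟩ := card_pos.1 (by omega : 0 < #{x | c x = μ})
  rw [mem_filter] at hQ
  have hQμ := hc.two_mul_add_card_rich_le_of_weight hPP hS (hQ.2 ▸ hμ)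
  rw [hQ.2] at hQμ
  obtain ⟨P, hP⟩ := card_pos.1 (by omega : 0 < #{x | c x = -μ})
  rw [mem_filter] at hP
  refine ⟨P, hP.2, fun l hl => ?_⟩
  have hPμ := hc.two_mul_add_card_rich_le_of_weight hPP hS (P := P) (by simpa [hP.2] using hμ)
  rw [hP.2, neg_neg] at hPμ
  have hrich : #{l | R P l ∧ 3 ≤ #{x | R x l ∧ c x ≠ 0 ∧ x ≠ P}} = 0 := by omega
  rw [card_eq_zero, filter_eq_empty_iff] at hrich
  have := hrich (mem_univ l)
  simp only [hl, true_and, not_le] at this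
  omega

end IsDualCodeWord

theorem ZMod.ofNat_ne_zero_of_not_dvd {p k : ℕ} [k.AtLeastTwo] (h : ¬p ∣ k) :
    (ofNat(k) : ZMod p) ≠ 0 := by
  rwa [← Nat.cast_ofNat, Ne, ZMod.natCast_eq_zero_iff]

theorem ZMod.ofNat_ne_zero_of_lt {p : ℕ} (k : ℕ) [hk : k.AtLeastTwo] (h : k < p) :
    (ofNat(k) : ZMod p) ≠ 0 :=
  ZMod.ofNat_ne_zero_of_not_dvd fun hd => (Nat.le_of_dvd (by have := hk.prop; omega) hd).not_gt h

/-- Relations between the sizes `f a = |K_a|` of the colour classes of a code word of weight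
`2p² - 2p + 4`; a colour `μ` with `f μ + 1 = 2 * p` is one with `|K_μ| = 2p - 1`. -/
structure IsColourProfile (p : ℕ) [NeZero p] (f : ZMod p → ℕ) : Prop where
  le_neg : ∀ a, a ≠ 0 → 0 < f a → 2 * p ≤ f (-a) + 1
  le_of_add_eq : ∀ μ, μ ≠ 0 → f μ + 1 = 2 * p →
    ∀ a b, a + b = μ → a ≠ 0 → b ≠ 0 → a ≠ -μ → f a ≤ f b
  neg_eq : ∀ μ, μ ≠ 0 → f μ + 1 = 2 * p → f (-μ) = f (2 * μ) + 1
  sum_eq : ∑ a ∈ univ.erase 0, f a + 2 * p = 2 * p ^ 2 + 4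

namespace IsColourProfile

theorem false_of_one_two_five {f : ZMod 5 → ℕ} (hf : IsColourProfile 5 f)
    (h₁ : f 1 + 1 = 2 * 5) (h₂ : f 2 + 1 = 2 * 5) : False := by
  have hn₁ : f 4 = f 2 + 1 := hf.neg_eq 1 (by decide) h₁
  have hn₂ : f 3 = f 4 + 1 := hf.neg_eq 2 (by decide) h₂
  have hsum := hf.sum_eq
  rw [show (univ.erase 0 : Finset (ZMod 5)) = {1, 2, 3, 4} by decide, sum_insert (by decide),
    sum_insert (by decide), sum_insert (by decide), sum_singleton] at hsum
  omega

theorem false_of_one_two_seven {f : ZMod 7 → ℕ} (hf : IsColourProfile 7 f)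
    (h₁ : f 1 + 1 = 2 * 7) (h₂ : f 2 + 1 = 2 * 7) : False := by
  have hn₁ : f 6 = f 2 + 1 := hf.neg_eq 1 (by decide) h₁
  have hn₂ : f 5 = f 4 + 1 := hf.neg_eq 2 (by decide) h₂
  have := hf.le_of_add_eq 1 (by decide) h₁ 5 3 (by decide) (by decide) (by decide) (by decide)
  have := hf.le_of_add_eq 1 (by decide) h₁ 3 5 (by decide) (by decide) (by decide) (by decide)
  have := hf.le_of_add_eq 2 (by decide) h₂ 6 3 (by decide) (by decide) (by decide) (by decide)
  have := hf.le_of_add_eq 2 (by decide) h₂ 3 6 (by decide) (by decide) (by decide) (by decide)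
  have hsum := hf.sum_eq
  rw [show (univ.erase 0 : Finset (ZMod 7)) = {1, 2, 3, 4, 5, 6} by decide,
    sum_insert (by decide), sum_insert (by decide), sum_insert (by decide),
    sum_insert (by decide), sum_insert (by decide), sum_singleton] at hsum
  omega

theorem le_of_pos {p : ℕ} [NeZero p] {f : ZMod p → ℕ} (hf : IsColourProfile p f) {a : ZMod p}
    (ha : a ≠ 0) (hfa : 0 < f a) : 2 * p ≤ f a + 1 := by
  have := hf.le_neg a ha hfa
  simpa using hf.le_neg (-a) (neg_ne_zero.2 ha) (by have := NeZero.pos p; omega)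

variable {p : ℕ} [Fact p.Prime] {f : ZMod p → ℕ}

theorem two_mul_le_neg (hf : IsColourProfile p f) (hp5 : 5 ≤ p) {μ : ZMod p} (hμ : μ ≠ 0)
    (hfμ : f μ + 1 = 2 * p) : 2 * p ≤ f (-μ) := by
  have h2 : (2 : ZMod p) ≠ 0 := ZMod.ofNat_ne_zero_of_lt 2 (by omega)
  have := hf.neg_eq μ hμ hfμ
  have := hf.le_neg μ hμ (by omega)
  have := hf.le_of_pos (mul_ne_zero h2 hμ) (by omega)
  omega

theorem false_of_generic_pair (hf : IsColourProfile p f) (hp5 : 5 ≤ p) {μ ν : ZMod p}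
    (hμ : μ ≠ 0) (hν : ν ≠ 0) (hfμ : f μ + 1 = 2 * p) (hfν : f ν + 1 = 2 * p)
    (hνμ : ν ≠ μ) (hνμ' : ν ≠ -μ) (hν2μ : ν ≠ 2 * μ) (hμ2ν : μ ≠ 2 * ν) : False := by
  -- `ν - μ` is a colour of size `2p - 1` as well, yet its negative `μ - ν` is too small.
  have hd : ν - μ ≠ 0 := sub_ne_zero.2 hνμ
  have h₁ := hf.le_of_add_eq ν hν hfν μ (ν - μ) (by ring) hμ hd
    fun h => hνμ' (by linear_combination h)
  have h₂ := hf.le_of_add_eq ν hν hfν (ν - μ) μ (by ring) hd hμ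
    fun h => hμ2ν (by linear_combination -h)
  have h₃ := hf.two_mul_le_neg hp5 hd (by omega)
  have h₄ := hf.le_of_add_eq μ hμ hfμ (-(ν - μ)) ν (by ring) (neg_ne_zero.2 hd) hν
    fun h => hν2μ (by linear_combination -h)
  omega

theorem comp_mul (hf : IsColourProfile p f) {μ : ZMod p} (hμ : μ ≠ 0) :
    IsColourProfile p (fun a => f (a * μ)) where
  le_neg a ha h := by simpa [neg_mul] using hf.le_neg (a * μ) (mul_ne_zero ha hμ) h
  le_of_add_eq ν hν hfν a b hab ha hb haν :=
    hf.le_of_add_eq (ν * μ) (mul_ne_zero hν hμ) hfν (a * μ) (b * μ) (by rw [← add_mul, hab])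
      (mul_ne_zero ha hμ) (mul_ne_zero hb hμ) (by rwa [ne_eq, ← neg_mul, mul_left_inj' hμ])
  neg_eq ν hν hfν := by
    simpa [neg_mul, mul_assoc] using hf.neg_eq (ν * μ) (mul_ne_zero hν hμ) hfν
  sum_eq := by
    rw [← hf.sum_eq]
    congr 1
    exact sum_nbij' (· * μ) (· * μ⁻¹) (by simp [hμ]) (by simp [hμ]) (by simp [hμ]) (by simp [hμ])
      fun _ _ => rfl

theorem false_of_one_two_of_ne_zero (hf : IsColourProfile p f) (hp5 : 5 ≤ p)
    (h5 : (5 : ZMod p) ≠ 0) (h7 : (7 : ZMod p) ≠ 0) (h₁ : f 1 + 1 = 2 * p)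
    (h₂ : f 2 + 1 = 2 * p) : False := by
  have h2 : (2 : ZMod p) ≠ 0 := ZMod.ofNat_ne_zero_of_lt 2 (by omega)
  have h3 : (3 : ZMod p) ≠ 0 := ZMod.ofNat_ne_zero_of_lt 3 (by omega)
  have h4 : (4 : ZMod p) ≠ 0 := ZMod.ofNat_ne_zero_of_lt 4 (by omega)
  have hn₁ := hf.neg_eq 1 one_ne_zero h₁
  have hn₂ := hf.neg_eq 2 h2 h₂
  simp only [mul_one, show (2 : ZMod p) * 2 = 4 by norm_num] at hn₁ hn₂
  have := hf.le_of_add_eq 1 one_ne_zero h₁ (-2) 3 (by norm_num) (neg_ne_zero.2 h2) h3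
    fun h => one_ne_zero (by linear_combination -h)
  have := hf.le_of_add_eq 1 one_ne_zero h₁ 3 (-2) (by norm_num) h3 (neg_ne_zero.2 h2)
    fun h => h4 (by linear_combination h)
  have := hf.le_of_add_eq 2 h2 h₂ (-1) 3 (by norm_num) (neg_ne_zero.2 one_ne_zero) h3
    fun h => one_ne_zero (by linear_combination h)
  have := hf.le_of_add_eq 2 h2 h₂ 3 (-1) (by norm_num) h3 (neg_ne_zero.2 one_ne_zero)
    fun h => h5 (by linear_combination h)
  have h₄ : f 4 + 1 = 2 * p := by omega
  exact hf.false_of_generic_pair hp5 one_ne_zero h4 h₁ h₄ (fun h => h3 (by linear_combination h))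
    (fun h => h5 (by linear_combination h)) (fun h => h2 (by linear_combination h))
    fun h => h7 (by linear_combination -h)

theorem false_of_one_two (hf : IsColourProfile p f) (hp5 : 5 ≤ p) (h₁ : f 1 + 1 = 2 * p)
    (h₂ : f 2 + 1 = 2 * p) : False := by
  rcases eq_or_ne p 5 with rfl | hp5'
  · exact hf.false_of_one_two_five h₁ h₂
  rcases eq_or_ne p 7 with rfl | hp7
  · exact hf.false_of_one_two_seven h₁ h₂
  exact hf.false_of_one_two_of_ne_zero hp5
    (ZMod.ofNat_ne_zero_of_not_dvd ((Nat.prime_dvd_prime_iff_eq Fact.out (by norm_num)).not.2 hp5'))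
    (ZMod.ofNat_ne_zero_of_not_dvd ((Nat.prime_dvd_prime_iff_eq Fact.out (by norm_num)).not.2 hp7))
    h₁ h₂

theorem false_of_double (hf : IsColourProfile p f) (hp5 : 5 ≤ p) {μ : ZMod p} (hμ : μ ≠ 0)
    (h₁ : f μ + 1 = 2 * p) (h₂ : f (2 * μ) + 1 = 2 * p) : False :=
  (hf.comp_mul hμ).false_of_one_two hp5 (by simpa using h₁) h₂

theorem subsingleton (hf : IsColourProfile p f) (hp5 : 5 ≤ p) :
    {μ | μ ≠ 0 ∧ f μ + 1 = 2 * p}.Subsingleton := by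
  rintro μ ⟨hμ, hfμ⟩ ν ⟨hν, hfν⟩
  by_contra hne
  by_cases hneg : ν = -μ
  · have := hf.two_mul_le_neg hp5 hμ hfμ
    subst hneg
    omega
  by_cases h2 : ν = 2 * μ
  · subst h2
    exact hf.false_of_double hp5 hμ hfμ hfν
  by_cases h2' : μ = 2 * ν
  · subst h2'
    exact hf.false_of_double hp5 hν hfν hfμ
  exact hf.false_of_generic_pair hp5 hμ hν hfμ hfν (Ne.symm hne) hneg h2 h2'

end IsColourProfile

theorem IsDualCodeWord.isColourProfile_card {Pt Ln : Type*} [Fintype Pt] [Fintype Ln]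
    [DecidableEq Pt] {p : ℕ} [Fact p.Prime] {R : Pt → Ln → Prop} [DecidableRel R]
    {c : Pt → ZMod p} (hp5 : 5 ≤ p) (hPP : IsProjectivePlaneOrder (p ^ 2) R)
    (hc : IsDualCodeWord p R c) (hS : #{x | c x ≠ 0} + 2 * p = 2 * p ^ 2 + 4) :
    IsColourProfile p fun a => #{x | c x = a} where
  le_neg a ha hpos := by
    obtain ⟨P, hP⟩ := card_pos.1 hpos
    rw [mem_filter] at hP
    have := hc.two_mul_add_card_rich_le_of_weight hPP hS (hP.2 ▸ ha)
    rw [hP.2] at this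
    omega
  le_of_add_eq μ hμ hfμ a b hab ha hb haμ := by
    obtain ⟨P, hP, hrich⟩ := hc.exists_eq_neg_forall_card_le_two hPP hS hμ hfμ
    have := hc.card_erase_le_card_erase hPP hrich ha hb (by rw [hP, add_assoc, hab, neg_add_cancel])
    rw [erase_eq_of_notMem (by simpa [hP] using haμ.symm)] at this
    exact this.trans card_erase_le
  neg_eq μ hμ hfμ := by
    obtain ⟨P, hP, hrich⟩ := hc.exists_eq_neg_forall_card_le_two hPP hS hμ hfμ
    have h2 : (2 : ZMod p) ≠ 0 := ZMod.ofNat_ne_zero_of_lt 2 (by omega)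
    have h3 : (3 : ZMod p) ≠ 0 := ZMod.ofNat_ne_zero_of_lt 3 (by omega)
    have h₁ := hc.card_erase_le_card_erase hPP hrich (neg_ne_zero.2 hμ) (mul_ne_zero h2 hμ)
      (by rw [hP]; ring)
    have h₂ := hc.card_erase_le_card_erase hPP hrich (mul_ne_zero h2 hμ) (neg_ne_zero.2 hμ)
      (by rw [hP]; ring)
    have hP₂ : P ∉ ({x | c x = 2 * μ} : Finset Pt) := by
      simpa [hP] using fun h => mul_ne_zero h3 hμ (by linear_combination -h)
    rw [card_erase_of_mem (s := {x | c x = -μ}) (by simpa using hP), erase_eq_of_notMem hP₂]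
      at h₁ h₂
    have : 0 < #{x | c x = -μ} := card_pos.2 ⟨P, by simpa using hP⟩
    omega
  sum_eq := by
    rw [← hS, card_eq_sum_card_fiberwise (f := c) (t := univ.erase 0)
      fun x hx => by simpa using hx]
    congr 1
    refine sum_congr rfl fun a ha => ?_
    rw [filter_filter]
    congr 1
    ext x
    simp only [mem_filter, mem_univ, true_and]
    exact (and_iff_right_of_imp fun h => h ▸ (mem_erase.1 ha).1).symm

/-- For `ε = 2`, at most one colour `μ` satisfies `|K_μ| = 2p - 1`. -/
theorem at_most_one_colour_card_eq {Pt Ln : Type} [Finite Pt] [Finite Ln]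
    (p : ℕ) (hp : p.Prime) (hp5 : 5 ≤ p)
    (R : Pt → Ln → Prop) (hPP : IsProjectivePlaneOrder (p ^ 2) R)
    (c : Pt → ZMod p) (hc : IsDualCodeWord p R c)
    (hw : (Function.support c).ncard = 2 * p ^ 2 - 2 * p + 4) :
    ({μ : ZMod p | μ ≠ 0 ∧ ({x | c x = μ} : Set Pt).ncard = 2 * p - 1}).Subsingleton := by
  classical
  have := Fact.mk hp
  have := Fintype.ofFinite Pt
  have := Fintype.ofFinite Ln
  have hS : #{x | c x ≠ 0} + 2 * p = 2 * p ^ 2 + 4 := by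
    rw [← Set.ncard_coe_finset, coe_filter_univ]
    have : p ≤ p ^ 2 := Nat.le_self_pow two_ne_zero p
    change (Function.support c).ncard + 2 * p = _
    omega
  refine ((hc.isColourProfile_card hp5 hPP hS).subsingleton hp5).anti fun μ ⟨hμ, hK⟩ => ⟨hμ, ?_⟩
  rw [← Set.ncard_coe_finset, coe_filter_univ, hK]
  omega
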